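/- Under the stated setup, for every q with |q| ≤ q₀ and every integer n ≥ 0, max{ 0, e^{−2 q₀ C₀ n} − D ρⁿ } ≤ h_q(x) ≤ e^{2 q₀ C₀ n} + D ρⁿ for all x ∈ Σ_A⁺. -/

import Mathlib

open MeasureTheory Real ENNReal

namespace SFT

/-- The one-sided subshift of finite type determined by the 0-1 matrix `A`. -/
def Space {s₀ : ℕ} (A : Matrix (Fin s₀) (Fin s₀) ℕ) : Type :=
  {ξ : ℕ → Fin s₀ // ∀ i, A (ξ i) (ξ (i + 1)) = 1}

variable {s₀ : ℕ} {A : Matrix (Fin s₀) (Fin s₀) ℕ}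

instance : TopologicalSpace (Space A) :=
  inferInstanceAs (TopologicalSpace {ξ : ℕ → Fin s₀ // ∀ i, A (ξ i) (ξ (i + 1)) = 1})

noncomputable instance : MeasurableSpace (Space A) := borel _
instance : BorelSpace (Space A) := ⟨rfl⟩

/-- The shift map σ. -/
def shift (x : Space A) : Space A := ⟨fun i => x.1 (i + 1), fun i => x.2 (i + 1)⟩

/-- `var_k g` as an extended real. -/
noncomputable def evar (g : Space A → ℝ) (k : ℕ) : ℝ≥0∞ :=
  ⨆ (ξ : Space A) (η : Space A) (_ : ∀ i ≤ k, ξ.1 i = η.1 i), ENNReal.ofReal |g ξ - g η|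

/-- `|g|_θ` as an extended real. -/
noncomputable def eHolder (θ : ℝ) (g : Space A → ℝ) : ℝ≥0∞ :=
  ⨆ k : ℕ, evar g k / ENNReal.ofReal (θ ^ k)

/-- `|g|_∞` as an extended real. -/
noncomputable def eSup (g : Space A → ℝ) : ℝ≥0∞ :=
  ⨆ ξ : Space A, ENNReal.ofReal |g ξ|

/-- `|g|_θ`. -/
noncomputable def holderNorm (θ : ℝ) (g : Space A → ℝ) : ℝ := (eHolder θ g).toReal

/-- `|g|_∞`. -/
noncomputable def supNorm (g : Space A → ℝ) : ℝ := (eSup g).toReal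

/-- `‖g‖_θ = |g|_θ + |g|_∞`. -/
noncomputable def fNorm (θ : ℝ) (g : Space A → ℝ) : ℝ := holderNorm θ g + supNorm g

/-- Membership in `F_θ(Σ_A⁺)`: finiteness of `‖g‖_θ`. -/
def MemF (θ : ℝ) (g : Space A → ℝ) : Prop := eHolder θ g + eSup g < ⊤


instance shiftFiberFinite (x : Space A) : Finite {y : Space A // shift y = x} := by
  apply Finite.of_injective (fun y : {y : Space A // shift y = x} => y.1.1 0)
  rintro ⟨y, hy⟩ ⟨z, hz⟩ h
  apply Subtype.ext
  apply Subtype.ext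
  funext n
  cases n with
  | zero => exact h
  | succ i =>
    have h1 : y.1 (i + 1) = x.1 i := congrFun (congrArg Subtype.val hy) i
    have h2 : z.1 (i + 1) = x.1 i := congrFun (congrArg Subtype.val hz) i
    rw [h1, h2]

/-- The Ruelle transfer operator `(L_f g)(x) = Σ_{σ y = x} e^{f(y)} g(y)`. -/
noncomputable def transfer (f g : Space A → ℝ) (x : Space A) : ℝ :=
  ∑' y : {y : Space A // shift y = x}, Real.exp (f y.1) * g y.1

/-- Two functions are cohomologous if they differ by a continuous coboundary. -/
def Cohomologous (u v : Space A → ℝ) : Prop :=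
  ∃ w : Space A → ℝ, Continuous w ∧ ∀ x, u x = v x + w (shift x) - w x

/-- ψ is cohomologous to a constant. -/
def CohomToConst (ψ : Space A → ℝ) : Prop := ∃ c : ℝ, Cohomologous ψ fun _ => c

/-- A finite measurable partition of the space. -/
def IsPartition {k : ℕ} (P : Fin k → Set (Space A)) : Prop :=
  (∀ i, MeasurableSet (P i)) ∧ (Pairwise fun i j => Disjoint (P i) (P j)) ∧
    (⋃ i, P i) = Set.univ

/-- Entropy of the n-th join `⋁_{j<n} σ^{-j} P` of a partition. -/
noncomputable def joinEntropy (m : Measure (Space A)) {k : ℕ} (P : Fin k → Set (Space A))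
    (n : ℕ) : ℝ :=
  ∑ a : Fin n → Fin k,
    Real.negMulLog (m (⋂ j : Fin n, shift^[(j : ℕ)] ⁻¹' P (a j))).toReal

/-- Measure-theoretic (Kolmogorov–Sinai) entropy of `m` with respect to the shift. -/
noncomputable def entropy (m : Measure (Space A)) : ℝ :=
  sSup {h | ∃ k : ℕ, ∃ P : Fin k → Set (Space A), IsPartition P ∧
    h = ⨅ n : ℕ, joinEntropy m P (n + 1) / (n + 1)}

/-- σ-invariance of a measure. -/
def IsInvariant (m : Measure (Space A)) : Prop := m.map shift = m

/-- Topological pressure via the variational principle. -/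
noncomputable def pressure (g : Space A → ℝ) : ℝ :=
  sSup {r | ∃ m : Measure (Space A), IsProbabilityMeasure m ∧ IsInvariant m ∧
    r = entropy m + ∫ x, g x ∂m}

/-- `m` is an equilibrium state of `g`. -/
def IsEqm (g : Space A → ℝ) (m : Measure (Space A)) : Prop :=
  IsProbabilityMeasure m ∧ IsInvariant m ∧ entropy m + ∫ x, g x ∂m = pressure g

/-- The Ruelle–Perron–Frobenius data of `f`: an eigenvalue `lam > 0`, a probability
eigenmeasure `ν` of the dual operator, and a positive normalised eigenfunction `h ∈ F_θ`. -/
def IsRPF (θ : ℝ) (f : Space A → ℝ) (lam : ℝ) (ν : Measure (Space A))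
    (h : Space A → ℝ) : Prop :=
  0 < lam ∧ IsProbabilityMeasure ν ∧
    (∀ g : Space A → ℝ, Continuous g → ∫ x, transfer f g x ∂ν = lam * ∫ x, g x ∂ν) ∧
    MemF θ h ∧ (∀ x, 0 < h x) ∧ (∀ x, transfer f h x = lam * h x) ∧ (∫ x, h x ∂ν) = 1


/-
Since `L_φ 1 = 1` and `|qψ| ≤ a := q₀ · max(|ψ|_∞, 1)`, the operator `L_{φ+qψ}` maps a function
with values in `[m, M]`, `m ≥ 0`, to one with values in `[e^{-a} m, e^{a} M]`. Hence
`e^{-na} ≤ L_{f_q}ⁿ 1 ≤ e^{na}`, and integrating against `ν_q` gives `e^{-a} ≤ λ_q ≤ e^{a}`, so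
`λ_q⁻ⁿ L_{f_q}ⁿ 1` lies in `[e^{-2na}, e^{2na}]`. The spectral gap applied to `g = 1` puts `h_q`
within `D ρⁿ` of it, and `a ≤ q₀ C₀`.
-/

lemma eSup_lt_top_of_memF {θ : ℝ} {g : Space A → ℝ} (hg : MemF θ g) : eSup g < ⊤ :=
  lt_of_le_of_lt le_add_self hg

lemma eSup_lt_top_of_abs_le {g : Space A → ℝ} {C : ℝ} (hg : ∀ ξ, |g ξ| ≤ C) : eSup g < ⊤ :=
  lt_of_le_of_lt (iSup_le fun ξ => ENNReal.ofReal_le_ofReal (hg ξ)) ENNReal.ofReal_lt_top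

lemma abs_le_supNorm {g : Space A → ℝ} (hg : eSup g < ⊤) (ξ : Space A) : |g ξ| ≤ supNorm g :=
  calc |g ξ| = (ENNReal.ofReal |g ξ|).toReal := (ENNReal.toReal_ofReal (abs_nonneg _)).symm
    _ ≤ (eSup g).toReal :=
      ENNReal.toReal_mono hg.ne (le_iSup (fun ξ => ENNReal.ofReal |g ξ|) ξ)

lemma supNorm_le_fNorm (θ : ℝ) (g : Space A → ℝ) : supNorm g ≤ fNorm θ g :=
  le_add_of_nonneg_left ENNReal.toReal_nonneg

lemma fNorm_nonneg (θ : ℝ) (g : Space A → ℝ) : 0 ≤ fNorm θ g :=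
  add_nonneg ENNReal.toReal_nonneg ENNReal.toReal_nonneg

lemma abs_le_fNorm (θ : ℝ) {g : Space A → ℝ} (hg : eSup g < ⊤) (ξ : Space A) :
    |g ξ| ≤ fNorm θ g :=
  (abs_le_supNorm hg ξ).trans (supNorm_le_fNorm θ g)

lemma eHolder_const (θ c : ℝ) : eHolder θ (fun _ : Space A => c) = 0 := by
  have hvar : ∀ k, evar (fun _ : Space A => c) k = 0 := fun k => by simp [evar]
  simp [eHolder, hvar]

lemma memF_const (θ c : ℝ) : MemF θ (fun _ : Space A => c) := by
  rw [MemF, eHolder_const, zero_add]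
  exact eSup_lt_top_of_abs_le fun _ => le_rfl

lemma fNorm_const [Nonempty (Space A)] (θ c : ℝ) : fNorm θ (fun _ : Space A => c) = |c| := by
  simp [fNorm, holderNorm, supNorm, eHolder_const, eSup]

lemma transfer_mono (f : Space A → ℝ) {g g' : Space A → ℝ} (hg : ∀ y, g y ≤ g' y)
    (x : Space A) : transfer f g x ≤ transfer f g' x :=
  Summable.tsum_le_tsum
    (fun y => mul_le_mul_of_nonneg_left (hg y.1) (exp_pos _).le) .of_finite .of_finite

lemma transfer_const {φ : Space A → ℝ} (hL1 : transfer φ (fun _ => 1) = fun _ => 1) (c : ℝ)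
    (x : Space A) : transfer φ (fun _ => c) x = c := by
  have h1 := congrFun hL1 x
  simp only [transfer, mul_one] at h1
  simp only [transfer, tsum_mul_right, h1, one_mul]

lemma exp_mul_transfer_le_transfer_add {f u g : Space A → ℝ} {c : ℝ} (hu : ∀ y, c ≤ u y)
    (hg : ∀ y, 0 ≤ g y) (x : Space A) :
    exp c * transfer f g x ≤ transfer (fun y => f y + u y) g x := by
  rw [transfer, ← tsum_mul_left]
  refine Summable.tsum_le_tsum (fun y => ?_) .of_finite .of_finite
  calc exp c * (exp (f y.1) * g y.1) = exp (f y.1 + c) * g y.1 := by rw [exp_add]; ring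
    _ ≤ exp (f y.1 + u y.1) * g y.1 := by gcongr; exacts [hg y.1, hu y.1]

lemma transfer_add_le_exp_mul_transfer {f u g : Space A → ℝ} {c : ℝ} (hu : ∀ y, u y ≤ c)
    (hg : ∀ y, 0 ≤ g y) (x : Space A) :
    transfer (fun y => f y + u y) g x ≤ exp c * transfer f g x := by
  rw [transfer, transfer, ← tsum_mul_left]
  refine Summable.tsum_le_tsum (fun y => ?_) .of_finite .of_finite
  calc exp (f y.1 + u y.1) * g y.1 ≤ exp (f y.1 + c) * g y.1 := by gcongr; exacts [hg y.1, hu y.1]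
    _ = exp c * (exp (f y.1) * g y.1) := by rw [exp_add]; ring

section Perturbation

variable {φ u : Space A → ℝ} {a : ℝ}

lemma transfer_add_const_mem_Icc (hL1 : transfer φ (fun _ => 1) = fun _ => 1)
    (hu : ∀ y, |u y| ≤ a) {c : ℝ} (hc : 0 ≤ c) (x : Space A) :
    transfer (fun y => φ y + u y) (fun _ => c) x ∈ Set.Icc (exp (-a) * c) (exp a * c) := by
  have hlo := exp_mul_transfer_le_transfer_add (f := φ) (fun y => (abs_le.mp (hu y)).1)
    (fun _ => hc) x
  have hhi := transfer_add_le_exp_mul_transfer (f := φ) (fun y => (abs_le.mp (hu y)).2)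
    (fun _ => hc) x
  rw [transfer_const hL1] at hlo hhi
  exact ⟨hlo, hhi⟩

lemma transfer_add_iterate_one_mem_Icc (hL1 : transfer φ (fun _ => 1) = fun _ => 1)
    (hu : ∀ y, |u y| ≤ a) (n : ℕ) (x : Space A) :
    (transfer fun y => φ y + u y)^[n] (fun _ => 1) x ∈ Set.Icc (exp (-(n * a))) (exp (n * a)) := by
  induction n generalizing x with
  | zero => simp
  | succ n ih =>
    rw [Function.iterate_succ_apply']
    have hlo := (transfer_add_const_mem_Icc hL1 hu (exp_pos (-(n * a))).le x).1
    have hhi := (transfer_add_const_mem_Icc hL1 hu (exp_pos (n * a)).le x).2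
    rw [← exp_add] at hlo hhi
    push_cast
    constructor
    · calc exp (-((n + 1) * a)) = exp (-a + -(n * a)) := by ring_nf
        _ ≤ _ := hlo
        _ ≤ _ := transfer_mono _ (fun y => (ih y).1) x
    · calc _ ≤ _ := transfer_mono _ (fun y => (ih y).2) x
        _ ≤ exp (a + n * a) := hhi
        _ = exp ((n + 1) * a) := by ring_nf

lemma IsRPF.eigenvalue_mem_Icc {θ lam : ℝ} {ν : Measure (Space A)} {h : Space A → ℝ}
    (hRPF : IsRPF θ (fun y => φ y + u y) lam ν h)
    (hL1 : transfer φ (fun _ => 1) = fun _ => 1) (hu : ∀ y, |u y| ≤ a) :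
    lam ∈ Set.Icc (exp (-a)) (exp a) := by
  obtain ⟨hlam, hν, hdual, -⟩ := hRPF
  have hT := fun x => transfer_add_const_mem_Icc hL1 hu zero_le_one x
  simp only [mul_one] at hT
  have hlam_eq : ∫ x, transfer (fun y => φ y + u y) (fun _ => 1) x ∂ν = lam := by
    simpa using hdual (fun _ => 1) continuous_const
  have hint : Integrable (fun x => transfer (fun y => φ y + u y) (fun _ => 1) x) ν := by
    by_contra hc
    rw [integral_undef hc] at hlam_eq
    exact hlam.ne' hlam_eq.symm
  rw [← hlam_eq]
  constructor
  · calc exp (-a) = ∫ _, exp (-a) ∂ν := by simp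
      _ ≤ _ := integral_mono (integrable_const _) hint fun x => (hT x).1
  · calc _ ≤ ∫ _, exp a ∂ν := integral_mono hint (integrable_const _) fun x => (hT x).2
      _ = exp a := by simp

lemma IsRPF.transfer_add_iterate_one_div_mem_Icc {θ lam : ℝ} {ν : Measure (Space A)}
    {h : Space A → ℝ} (hRPF : IsRPF θ (fun y => φ y + u y) lam ν h)
    (hL1 : transfer φ (fun _ => 1) = fun _ => 1) (hu : ∀ y, |u y| ≤ a) (n : ℕ) (x : Space A) :
    (transfer fun y => φ y + u y)^[n] (fun _ => 1) x / lam ^ n ∈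
      Set.Icc (exp (-(2 * (n * a)))) (exp (2 * (n * a))) := by
  obtain ⟨hlam_lo, hlam_hi⟩ := hRPF.eigenvalue_mem_Icc hL1 hu
  obtain ⟨hT_lo, hT_hi⟩ := transfer_add_iterate_one_mem_Icc hL1 hu n x
  have hpow_lo : exp (-(n * a)) ≤ lam ^ n := by
    rw [neg_mul_eq_mul_neg, exp_nat_mul]; gcongr
  have hpow_hi : lam ^ n ≤ exp (n * a) := by
    rw [exp_nat_mul]; exact pow_le_pow_left₀ hRPF.1.le hlam_hi n
  have hpow_pos : 0 < lam ^ n := pow_pos hRPF.1 n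
  constructor
  · rw [le_div_iff₀ hpow_pos]
    calc exp (-(2 * (n * a))) * lam ^ n ≤ exp (-(2 * (n * a))) * exp (n * a) := by gcongr
      _ = exp (-(n * a)) := by rw [← exp_add]; ring_nf
      _ ≤ _ := hT_lo
  · rw [div_le_iff₀ hpow_pos]
    calc _ ≤ exp (n * a) := hT_hi
      _ = exp (2 * (n * a)) * exp (-(n * a)) := by rw [← exp_add]; ring_nf
      _ ≤ exp (2 * (n * a)) * lam ^ n := by gcongr

end Perturbation

lemma IsRPF.abs_transfer_iterate_one_div_sub_le {θ lam : ℝ} {f : Space A → ℝ}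
    {ν : Measure (Space A)} {h : Space A → ℝ} (hRPF : IsRPF θ f lam ν h) {n : ℕ} {B ε : ℝ}
    (hbdd : ∀ ξ, |(transfer f)^[n] (fun _ => 1) ξ / lam ^ n| ≤ B)
    (hgap : fNorm θ (fun x => (transfer f)^[n] (fun _ => 1) x / lam ^ n - h x * ∫ _, 1 ∂ν)
      ≤ ε * fNorm θ (fun _ : Space A => (1 : ℝ))) (x : Space A) :
    |(transfer f)^[n] (fun _ => 1) x / lam ^ n - h x| ≤ ε := by
  obtain ⟨-, hν, -, hhF, -⟩ := hRPF
  have : Nonempty (Space A) := ⟨x⟩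
  simp only [integral_const, probReal_univ, smul_eq_mul, mul_one, fNorm_const, abs_one]
    at hgap
  have hsup : eSup (fun ξ => (transfer f)^[n] (fun _ => 1) ξ / lam ^ n - h ξ) < ⊤ :=
    eSup_lt_top_of_abs_le fun ξ => (abs_sub _ _).trans
      (add_le_add (hbdd ξ) (abs_le_supNorm (eSup_lt_top_of_memF hhF) ξ))
  exact (abs_le_fNorm θ hsup x).trans hgap

theorem statement12_general
    {s₀ : ℕ} {A : Matrix (Fin s₀) (Fin s₀) ℕ} {θ : ℝ}
    (φ ψ : Space A → ℝ) (hψ : MemF θ ψ)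
    (hL1 : transfer φ (fun _ => 1) = fun _ => 1)
    (b C₀ : ℝ)
    (hC₀ : C₀ = fNorm θ φ + 2 * max (supNorm ψ) 1)
    (lam : ℝ → ℝ) (ν : ℝ → Measure (Space A)) (hq : ℝ → Space A → ℝ)
    (hRPF : ∀ q : ℝ, IsRPF θ (fun x => φ x + q * ψ x) (lam q) (ν q) (hq q))
    (D ρ : ℝ)
    (hgap : ∀ q : ℝ, |q| ≤ 1 / b → ∀ g : Space A → ℝ, MemF θ g → ∀ n : ℕ,
      fNorm θ (fun x => (transfer (fun y => φ y + q * ψ y))^[n] g x / lam q ^ n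
          - hq q x * ∫ y, g y ∂(ν q)) ≤ D * ρ ^ n * fNorm θ g)
    (q₀ : ℝ) (hq₀b : q₀ ≤ 1 / b) :
    ∀ q : ℝ, |q| ≤ q₀ → ∀ (n : ℕ) (x : Space A),
      max 0 (Real.exp (-(2 * q₀ * C₀ * n)) - D * ρ ^ n) ≤ hq q x ∧
      hq q x ≤ Real.exp (2 * q₀ * C₀ * n) + D * ρ ^ n := by
  intro q hq₀ n x
  set a := q₀ * max (supNorm ψ) 1
  have hqψ : ∀ y, |q * ψ y| ≤ a := fun y => by
    rw [abs_mul]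
    exact mul_le_mul hq₀ ((abs_le_supNorm (eSup_lt_top_of_memF hψ) y).trans (le_max_left _ _))
      (abs_nonneg _) ((abs_nonneg q).trans hq₀)
  have hna : 2 * (n * a) ≤ 2 * q₀ * C₀ * n := by
    have : max (supNorm ψ) 1 ≤ C₀ := by
      rw [hC₀]; linarith [fNorm_nonneg θ φ, le_max_right (supNorm ψ) 1]
    have := mul_le_mul_of_nonneg_left this ((abs_nonneg q).trans hq₀)
    nlinarith [(n.cast_nonneg : (0 : ℝ) ≤ n)]
  have hbounds := fun ξ => (hRPF q).transfer_add_iterate_one_div_mem_Icc hL1 hqψ n ξ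
  obtain ⟨hlo, hhi⟩ := hbounds x
  have hclose := (hRPF q).abs_transfer_iterate_one_div_sub_le
    (fun ξ => (abs_of_pos ((exp_pos _).trans_le (hbounds ξ).1)).trans_le (hbounds ξ).2)
    (hgap q (hq₀.trans hq₀b) _ (memF_const θ 1) n) x
  have hexp_lo : exp (-(2 * q₀ * C₀ * n)) ≤ exp (-(2 * (n * a))) := exp_le_exp.mpr (by linarith)
  have hexp_hi : exp (2 * (n * a)) ≤ exp (2 * q₀ * C₀ * n) := exp_le_exp.mpr hna
  obtain ⟨hclose_lo, hclose_hi⟩ := abs_le.mp hclose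
  obtain ⟨-, -, -, -, hq_pos, -⟩ := hRPF q
  exact ⟨max_le (hq_pos x).le (by linarith), by linarith⟩

theorem statement12
    {s₀ M : ℕ} {A : Matrix (Fin s₀) (Fin s₀) ℕ} {θ : ℝ}
    (hs₀ : 2 ≤ s₀) (h01 : ∀ i j, A i j = 0 ∨ A i j = 1) (hM : 0 < M)
    (hap : ∀ i j, 0 < (A ^ M) i j) (hθ0 : 0 < θ) (hθ1 : θ < 1)
    (φ ψ : Space A → ℝ) (hφ : MemF θ φ) (hψ : MemF θ ψ)
    (hL1 : transfer φ (fun _ => 1) = fun _ => 1) (hψ0 : ∀ x, 0 ≤ ψ x)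
    (hcoh : ¬ CohomToConst ψ)
    (μ : Measure (Space A)) (hμ : IsEqm φ μ) (ψt : ℝ) (hψt : ψt = ∫ x, ψ x ∂μ)
    (b C₀ : ℝ) (hb : b = max 1 (holderNorm θ ψ))
    (hC₀ : C₀ = fNorm θ φ + 2 * max (supNorm ψ) 1)
    (lam : ℝ → ℝ) (ν : ℝ → Measure (Space A)) (hq : ℝ → Space A → ℝ)
    (hRPF : ∀ q : ℝ, IsRPF θ (fun x => φ x + q * ψ x) (lam q) (ν q) (hq q))
    (D ρ : ℝ) (hD1 : 1 ≤ D) (hρ : ρ ∈ Set.Ioo (0:ℝ) 1)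
    (hgap : ∀ q : ℝ, |q| ≤ 1 / b → ∀ g : Space A → ℝ, MemF θ g → ∀ n : ℕ,
      fNorm θ (fun x => (transfer (fun y => φ y + q * ψ y))^[n] g x / lam q ^ n
          - hq q x * ∫ y, g y ∂(ν q)) ≤ D * ρ ^ n * fNorm θ g)
    (hLψ : ∀ n : ℕ, supNorm (fun x => (transfer φ)^[n] ψ x - ψt) ≤ C₀ * D * ρ ^ n)
    (q₀ : ℝ) (hq₀pos : 0 < q₀) (hq₀b : q₀ ≤ 1 / b) :
    ∀ q : ℝ, |q| ≤ q₀ → ∀ (n : ℕ) (x : Space A),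
      max 0 (Real.exp (-(2 * q₀ * C₀ * n)) - D * ρ ^ n) ≤ hq q x ∧
      hq q x ≤ Real.exp (2 * q₀ * C₀ * n) + D * ρ ^ n :=
  statement12_general φ ψ hψ hL1 b C₀ hC₀ lam ν hq hRPF D ρ hgap q₀ hq₀b

end SFT
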